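/- Let m, n be positive integers, let r ≤ s ≤ min(m,n), let A be a complex m×n matrix of rank r with singular values σ_1 ≥ … ≥ σ_r > 0, and let Ã = A + E be a complex m×n matrix of rank s with singular values σ̃_1 ≥ … ≥ σ̃_s > 0. Set H = (AᴴA)^{1/2}, H̃ = (ÃᴴÃ)^{1/2}, F = Σ_{j=1}^r σ_j² + Σ_{j=1}^s σ̃_j², and G = Σ_{j=1}^r σ_j σ̃_j. Then ‖H − H̃‖_F ≥ sqrt( (F − 2G) / (F + 2G) ) · ‖E‖_F. -/

import Mathlib

open scoped BigOperators Matrix ComplexOrder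

noncomputable def frob {m n : ℕ} (A : Matrix (Fin m) (Fin n) ℂ) : ℝ :=
  Real.sqrt (∑ i, ∑ j, ‖A i j‖ ^ 2)

noncomputable def absMat {m n : ℕ} (A : Matrix (Fin m) (Fin n) ℂ) :
    Matrix (Fin n) (Fin n) ℂ :=
  (Matrix.posSemidef_conjTranspose_mul_self A).1.eigenvectorUnitary.1 *
    Matrix.diagonal ((↑) ∘ Real.sqrt ∘ (Matrix.posSemidef_conjTranspose_mul_self A).1.eigenvalues) *
    (star (Matrix.posSemidef_conjTranspose_mul_self A).1.eigenvectorUnitary : Matrix (Fin n) (Fin n) ℂ)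

noncomputable def svdMat (m n r : ℕ) (σ : ℕ → ℝ) : Matrix (Fin m) (Fin n) ℂ :=
  Matrix.of fun i j =>
    if (i : ℕ) = (j : ℕ) ∧ (i : ℕ) < r then ((σ ((i : ℕ) + 1) : ℝ) : ℂ) else 0

/-- `A` admits a singular value decomposition with singular values
`σ 1, …, σ r` (indexed from 1) on the diagonal. -/
def HasSVD {m n : ℕ} (A : Matrix (Fin m) (Fin n) ℂ) (r : ℕ) (σ : ℕ → ℝ) : Prop :=
  ∃ (U : Matrix (Fin m) (Fin m) ℂ) (V : Matrix (Fin n) (Fin n) ℂ),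
    Uᴴ * U = 1 ∧ U * Uᴴ = 1 ∧ Vᴴ * V = 1 ∧ V * Vᴴ = 1 ∧
    A = U * svdMat m n r σ * Vᴴ

/-- `σ 1 ≥ σ 2 ≥ … ≥ σ r > 0`. -/
def SingVals (r : ℕ) (σ : ℕ → ℝ) : Prop :=
  (∀ j, 1 ≤ j → j ≤ r → 0 < σ j) ∧ ∀ j, 1 ≤ j → j < r → σ (j + 1) ≤ σ j

/-- Generalized polar decomposition: `A = Q * |A|`, where `Q` is a rank-`r` partial
isometry such that the column space of `Qᴴ` equals the column space of `|A|`. -/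
def IsPolar {m n : ℕ} (A Q : Matrix (Fin m) (Fin n) ℂ) (r : ℕ) : Prop :=
  A = Q * absMat A ∧ Q * Qᴴ * Q = Q ∧ Q.rank = r ∧
    LinearMap.range (Matrix.mulVecLin Qᴴ) =
      LinearMap.range (Matrix.mulVecLin (absMat A))

/-!
With the Frobenius inner product `Re tr(XᴴY)`,
`‖E‖² = ‖A‖² + ‖Ã‖² - 2 Re tr(AᴴÃ)` and `‖H - H̃‖² = ‖H‖² + ‖H̃‖² - 2 Re tr(HᴴH̃)`, while
`‖H‖² = ‖A‖² = Σ σⱼ²` and `‖H̃‖² = ‖Ã‖² = Σ σ̃ⱼ²` because `H = V Σ Vᴴ` whenever `A = U Σ Vᴴ`.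
Von Neumann's trace inequality `|tr(XᴴY)| ≤ Σ σⱼ(X) σⱼ(Y)` bounds both cross terms by `G`, so
`‖E‖² ≤ F + 2G` and `‖H - H̃‖² ≥ F - 2G`, which gives the claim.

For the trace inequality, write `tr(AᴴÃ) = Σ_{p,q} σ_p σ̃_q W_pq conj(Z_pq)` with unitary `W`, `Z`;
then `(|W_pq|² + |Z_pq|²) / 2` is a doubly substochastic matrix, and against such a matrix two
nonincreasing nonnegative sequences pair at most as well as on the diagonal (summation by parts).
-/

open Finset Matrix

theorem sum_range_mul_le_sum_range_of_antitone {a c : ℕ → ℝ} {N k : ℕ} (ha : Antitone a)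
    (hak : 0 ≤ a k) (hkN : k ≤ N) (hc0 : ∀ i < N, 0 ≤ c i) (hc1 : ∀ i < N, c i ≤ 1)
    (hc : ∑ i ∈ range N, c i ≤ k) :
    ∑ i ∈ range N, a i * c i ≤ ∑ i ∈ range k, a i := by
  have hlow : ∀ i ∈ range k, a i * c i ≤ a i + a k * (c i - 1) := fun i hi => by
    have hi := mem_range.1 hi
    nlinarith [ha (le_of_lt hi), hc1 i (by omega)]
  have hhigh : ∀ i ∈ Ico k N, a i * c i ≤ a k * c i := fun i hi =>
    mul_le_mul_of_nonneg_right (ha (mem_Ico.1 hi).1) (hc0 i (mem_Ico.1 hi).2)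
  calc ∑ i ∈ range N, a i * c i
      = ∑ i ∈ range k, a i * c i + ∑ i ∈ Ico k N, a i * c i :=
        (sum_range_add_sum_Ico _ hkN).symm
    _ ≤ ∑ i ∈ range k, (a i + a k * (c i - 1)) + ∑ i ∈ Ico k N, a k * c i :=
        add_le_add (sum_le_sum hlow) (sum_le_sum hhigh)
    _ = ∑ i ∈ range k, a i + a k * (∑ i ∈ range N, c i - k) := by
        rw [← sum_range_add_sum_Ico c hkN, sum_add_distrib, ← mul_sum, ← mul_sum,
          sum_sub_distrib]
        simp only [sum_const, card_range, nsmul_eq_mul, mul_one]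
        ring
    _ ≤ ∑ i ∈ range k, a i := by
        linarith [mul_nonpos_of_nonneg_of_nonpos hak (sub_nonpos.2 hc)]

theorem sum_range_mul_le_of_sum_range_le {a b c : ℕ → ℝ} {N : ℕ} (hb : Antitone b)
    (hb0 : ∀ i, 0 ≤ b i) (hca : ∀ k ≤ N, ∑ i ∈ range k, c i ≤ ∑ i ∈ range k, a i) :
    ∑ i ∈ range N, b i * c i ≤ ∑ i ∈ range N, b i * a i := by
  set D : ℕ → ℝ := fun k => ∑ i ∈ range k, (a i - c i)
  have hD : ∀ k ≤ N, 0 ≤ D k := fun k hk => by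
    simp only [D, sum_sub_distrib, sub_nonneg]; exact hca k hk
  rw [← sub_nonneg, ← sum_sub_distrib]
  have hparts := sum_range_by_parts b (fun i => a i - c i) N
  simp only [smul_eq_mul] at hparts
  simp only [← mul_sub]
  rw [hparts]
  refine sub_nonneg.2 (le_trans (sum_nonpos fun i hi => ?_) (mul_nonneg (hb0 _) (hD N le_rfl)))
  exact mul_nonpos_of_nonpos_of_nonneg (sub_nonpos.2 (hb (Nat.le_succ i)))
    (hD _ (by have := mem_range.1 hi; omega))

theorem sum_range_sum_range_mul_le_of_antitone {a b : ℕ → ℝ} {P : ℕ → ℕ → ℝ} {N : ℕ}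
    (ha : Antitone a) (ha0 : ∀ i, 0 ≤ a i) (hb : Antitone b) (hb0 : ∀ i, 0 ≤ b i)
    (hP : ∀ i j, 0 ≤ P i j) (hrow : ∀ i < N, ∑ j ∈ range N, P i j ≤ 1)
    (hcol : ∀ j < N, ∑ i ∈ range N, P i j ≤ 1) :
    ∑ i ∈ range N, ∑ j ∈ range N, a i * b j * P i j ≤ ∑ i ∈ range N, a i * b i := by
  have hpartial : ∀ k ≤ N,
      ∑ j ∈ range k, ∑ i ∈ range N, a i * P i j ≤ ∑ i ∈ range k, a i := fun k hk => by
    rw [sum_comm]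
    simp only [← mul_sum]
    refine sum_range_mul_le_sum_range_of_antitone ha (ha0 k) hk
      (fun i _ => sum_nonneg fun j _ => hP i j)
      (fun i hi => le_trans (sum_le_sum_of_subset_of_nonneg (range_subset_range.2 hk)
        fun j _ _ => hP i j) (hrow i hi)) ?_
    rw [sum_comm]
    calc ∑ j ∈ range k, ∑ i ∈ range N, P i j ≤ ∑ j ∈ range k, (1 : ℝ) :=
          sum_le_sum fun j hj => hcol j (by have := mem_range.1 hj; omega)
      _ = k := by simp
  calc ∑ i ∈ range N, ∑ j ∈ range N, a i * b j * P i j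
      = ∑ j ∈ range N, b j * ∑ i ∈ range N, a i * P i j := by
        rw [sum_comm]
        simp only [mul_sum]
        exact sum_congr rfl fun _ _ => sum_congr rfl fun _ _ => by ring
    _ ≤ ∑ j ∈ range N, b j * a j := sum_range_mul_le_of_sum_range_le hb hb0 hpartial
    _ = ∑ i ∈ range N, a i * b i := sum_congr rfl fun _ _ => mul_comm _ _

noncomputable def singSeq (r : ℕ) (σ : ℕ → ℝ) (k : ℕ) : ℝ :=
  if k < r then σ (k + 1) else 0

theorem singSeq_of_le {r k : ℕ} (σ : ℕ → ℝ) (hk : r ≤ k) : singSeq r σ k = 0 := by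
  simp [singSeq, hk.not_gt]

theorem SingVals.singSeq_nonneg {r : ℕ} {σ : ℕ → ℝ} (hσ : SingVals r σ) (k : ℕ) :
    0 ≤ singSeq r σ k := by
  unfold singSeq
  split_ifs with hk
  · exact (hσ.1 (k + 1) le_add_self hk).le
  · exact le_rfl

theorem SingVals.antitone_singSeq {r : ℕ} {σ : ℕ → ℝ} (hσ : SingVals r σ) :
    Antitone (singSeq r σ) := by
  refine antitone_nat_of_succ_le fun k => ?_
  by_cases hk : k + 1 < r
  · simp only [singSeq, hk, k.lt_succ_self.trans hk, if_true]
    exact hσ.2 (k + 1) le_add_self hk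
  · simp only [singSeq, hk, if_false]
    exact hσ.singSeq_nonneg k

theorem sum_range_singSeq_mul_singSeq {r s N : ℕ} (σ τ : ℕ → ℝ) (hrs : r ≤ s) (hrN : r ≤ N) :
    ∑ k ∈ range N, singSeq r σ k * singSeq s τ k = ∑ j ∈ Icc 1 r, σ j * τ j := by
  rw [← sum_range_add_sum_Ico _ hrN, sum_eq_zero (s := Ico r N), add_zero,
    ← Finset.Ico_add_one_right_eq_Icc, sum_Ico_eq_sum_range, Nat.add_sub_cancel]
  · refine sum_congr rfl fun k hk => ?_
    have hk := mem_range.1 hk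
    simp [singSeq, hk, hk.trans_le hrs, add_comm]
  · intro k hk
    rw [singSeq_of_le σ (mem_Ico.1 hk).1, zero_mul]

theorem Fin.sum_ite_val_eq {M : Type*} [AddCommMonoid M] {m : ℕ} (p : ℕ) {f : ℕ → M}
    (hf : ∀ i, m ≤ i → f i = 0) :
    ∑ i : Fin m, (if p = i then f i else 0) = f p := by
  rw [Fin.sum_univ_eq_sum_range (fun i => if p = i then f i else 0), sum_ite_eq]
  split_ifs with hp
  · rfl
  · exact (hf p (not_lt.1 (mt mem_range.2 hp))).symm

namespace Matrix

-- Lets the unitary factors `Uᴴ U'` (of size `m`) and `Vᴴ V'` (of size `n`) be paired entrywise.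
def extendByZero {α : Type*} [Zero α] {m n : ℕ} (W : Matrix (Fin m) (Fin n) α) (i j : ℕ) : α :=
  if h : i < m ∧ j < n then W ⟨i, h.1⟩ ⟨j, h.2⟩ else 0

section extendByZero

variable {α : Type*} [Zero α] {m n : ℕ}

@[simp]
theorem extendByZero_val (W : Matrix (Fin m) (Fin n) α) (i : Fin m) (j : Fin n) :
    W.extendByZero i j = W i j := by
  simp [extendByZero]

theorem extendByZero_of_le_left (W : Matrix (Fin m) (Fin n) α) {i : ℕ} (hi : m ≤ i) (j : ℕ) :
    W.extendByZero i j = 0 := by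
  simp [extendByZero, hi.not_gt]

theorem extendByZero_of_le_right (W : Matrix (Fin m) (Fin n) α) (i : ℕ) {j : ℕ} (hj : n ≤ j) :
    W.extendByZero i j = 0 := by
  simp [extendByZero, hj.not_gt]

end extendByZero

theorem extendByZero_conjTranspose {m n : ℕ} (W : Matrix (Fin m) (Fin n) ℂ) (i j : ℕ) :
    Wᴴ.extendByZero i j = star (W.extendByZero j i) := by
  by_cases h : i < n ∧ j < m
  · simp [extendByZero, h]
  · simp [extendByZero, h, and_comm.not.1 h]

theorem trace_mul_conjTranspose {ι κ : Type*} [Fintype ι] [Fintype κ]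
    (M Z : Matrix ι κ ℂ) : (M * Zᴴ).trace = ∑ i, ∑ j, M i j * star (Z i j) := by
  simp [trace, mul_apply]

theorem sum_norm_sq_row_of_mem_unitaryGroup {ι : Type*} [Fintype ι] [DecidableEq ι]
    {U : Matrix ι ι ℂ} (hU : U ∈ unitaryGroup ι ℂ) (i : ι) : ∑ j, ‖U i j‖ ^ 2 = 1 := by
  have h := congr_fun (congr_fun (mem_unitaryGroup_iff.1 hU) i) i
  simp only [mul_apply, star_apply, one_apply_eq, ← starRingEnd_apply, Complex.mul_conj,
    Complex.normSq_eq_norm_sq] at h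
  exact_mod_cast h

theorem sum_range_norm_sq_extendByZero_le_one {d : ℕ} {W : Matrix (Fin d) (Fin d) ℂ}
    (hW : W ∈ unitaryGroup (Fin d) ℂ) (i N : ℕ) :
    ∑ j ∈ range N, ‖W.extendByZero i j‖ ^ 2 ≤ 1 := by
  by_cases hi : i < d
  · calc ∑ j ∈ range N, ‖W.extendByZero i j‖ ^ 2
        ≤ ∑ j ∈ range (max N d), ‖W.extendByZero i j‖ ^ 2 :=
          sum_le_sum_of_subset_of_nonneg (range_subset_range.2 (le_max_left _ _))
            fun _ _ _ => sq_nonneg _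
      _ = ∑ j ∈ range d, ‖W.extendByZero i j‖ ^ 2 := by
          refine (sum_subset (range_subset_range.2 (le_max_right _ _)) fun j _ hj => ?_).symm
          rw [W.extendByZero_of_le_right i (not_lt.1 (mt mem_range.2 hj)), norm_zero, sq,
            mul_zero]
      _ = ∑ j : Fin d, ‖W ⟨i, hi⟩ j‖ ^ 2 := by
          rw [← Fin.sum_univ_eq_sum_range (fun j => ‖W.extendByZero i j‖ ^ 2)]
          simp [extendByZero, hi]
      _ = 1 := sum_norm_sq_row_of_mem_unitaryGroup hW _
  · simp [extendByZero, hi]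

end Matrix

theorem frob_sq {m n : ℕ} (A : Matrix (Fin m) (Fin n) ℂ) :
    frob A ^ 2 = ∑ i, ∑ j, ‖A i j‖ ^ 2 :=
  Real.sq_sqrt (by positivity)

theorem frob_sq_eq_re_trace {m n : ℕ} (A : Matrix (Fin m) (Fin n) ℂ) :
    frob A ^ 2 = (Aᴴ * A).trace.re := by
  simp only [trace_mul_comm Aᴴ, trace_mul_conjTranspose, frob_sq, Complex.re_sum,
    Complex.star_def, Complex.mul_conj, Complex.normSq_eq_norm_sq, Complex.ofReal_re]

theorem frob_sub_sq {m n : ℕ} (A B : Matrix (Fin m) (Fin n) ℂ) :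
    frob (A - B) ^ 2 = frob A ^ 2 + frob B ^ 2 - 2 * (Aᴴ * B).trace.re := by
  have hBA : (Bᴴ * A).trace.re = (Aᴴ * B).trace.re := by
    rw [← conjTranspose_conjTranspose A, ← conjTranspose_mul, trace_conjTranspose,
      conjTranspose_conjTranspose]
    exact Complex.conj_re _
  simp only [frob_sq_eq_re_trace, conjTranspose_sub, Matrix.sub_mul, Matrix.mul_sub, trace_sub,
    Complex.sub_re, hBA]
  ring

theorem frob_sub_comm {m n : ℕ} (A B : Matrix (Fin m) (Fin n) ℂ) :
    frob (A - B) = frob (B - A) := by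
  simp only [frob, Matrix.sub_apply, norm_sub_rev]

theorem svdMat_apply (m n r : ℕ) (σ : ℕ → ℝ) (i : Fin m) (j : Fin n) :
    svdMat m n r σ i j = if (i : ℕ) = j then (singSeq r σ i : ℂ) else 0 := by
  by_cases hi : (i : ℕ) < r <;> simp [svdMat, singSeq, hi]

theorem conjTranspose_svdMat (m n r : ℕ) (σ : ℕ → ℝ) :
    (svdMat m n r σ)ᴴ = svdMat n m r σ := by
  ext i j
  simp only [conjTranspose_apply, svdMat_apply, eq_comm (a := (j : ℕ))]
  split_ifs <;> simp_all

theorem conjTranspose_svdMat_mul_mul_svdMat_apply {m n r s : ℕ} (σ τ : ℕ → ℝ)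
    (W : Matrix (Fin m) (Fin m) ℂ) (p q : Fin n) :
    ((svdMat m n r σ)ᴴ * W * svdMat m n s τ) p q =
      singSeq r σ p * singSeq s τ q * W.extendByZero p q := by
  have hcollapse : ∀ (c : ℂ) (j : Fin m), ∑ i : Fin m, (if (p : ℕ) = i then c * W i j else 0) =
      c * W.extendByZero p j := fun c j => by
    rw [← Fin.sum_ite_val_eq (p : ℕ) (f := fun i => c * W.extendByZero i j)
      fun i hi => by rw [W.extendByZero_of_le_left hi, mul_zero]]
    simp only [W.extendByZero_val]
  simp only [conjTranspose_svdMat, mul_apply, svdMat_apply, ite_mul, zero_mul, mul_ite,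
    mul_zero, hcollapse, eq_comm (b := (q : ℕ))]
  rw [Fin.sum_ite_val_eq (q : ℕ)
    (f := fun j => (singSeq r σ p : ℂ) * W.extendByZero p j * (singSeq s τ j : ℂ))
    fun j hj => by rw [W.extendByZero_of_le_right _ hj, mul_zero, zero_mul]]
  ring

theorem svdMat_self (n r : ℕ) (σ : ℕ → ℝ) :
    svdMat n n r σ = diagonal fun p : Fin n => (singSeq r σ p : ℂ) := by
  ext p q
  simp only [svdMat_apply, diagonal_apply, Fin.val_inj]

theorem conjTranspose_svdMat_mul_svdMat {m n r : ℕ} (σ : ℕ → ℝ) (hrm : r ≤ m) :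
    (svdMat m n r σ)ᴴ * svdMat m n r σ = diagonal fun p : Fin n => (singSeq r σ p : ℂ) ^ 2 := by
  ext p q
  have h := conjTranspose_svdMat_mul_mul_svdMat_apply (r := r) (s := r) σ σ
    (1 : Matrix (Fin m) (Fin m) ℂ) p q
  rw [Matrix.mul_one] at h
  rw [h, diagonal_apply]
  by_cases hpq : p = q
  · subst hpq
    by_cases hp : (p : ℕ) < m
    · simp [extendByZero, hp, sq]
    · simp [singSeq_of_le σ (hrm.trans (not_lt.1 hp))]
  · simp [extendByZero, one_apply, Fin.val_inj, hpq]

theorem norm_trace_svdMat_unitary_le {m n r s : ℕ} {σ τ : ℕ → ℝ} (hσ : SingVals r σ)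
    (hτ : SingVals s τ) {W : Matrix (Fin m) (Fin m) ℂ} {Z : Matrix (Fin n) (Fin n) ℂ}
    (hW : W ∈ unitaryGroup (Fin m) ℂ) (hZ : Z ∈ unitaryGroup (Fin n) ℂ) :
    ‖((svdMat m n r σ)ᴴ * W * svdMat m n s τ * Zᴴ).trace‖ ≤
      ∑ k ∈ range n, singSeq r σ k * singSeq s τ k := by
  set a := singSeq r σ
  set b := singSeq s τ
  set P : ℕ → ℕ → ℝ := fun i j => (‖W.extendByZero i j‖ ^ 2 + ‖Z.extendByZero i j‖ ^ 2) / 2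
  have hrow : ∀ i < n, ∑ j ∈ range n, P i j ≤ 1 := fun i _ => by
    simp only [P, ← sum_div, sum_add_distrib]
    linarith [W.sum_range_norm_sq_extendByZero_le_one hW i n,
      Z.sum_range_norm_sq_extendByZero_le_one hZ i n]
  have hcol : ∀ j < n, ∑ i ∈ range n, P i j ≤ 1 := fun j _ => by
    simp only [P, ← sum_div, sum_add_distrib]
    have hW' := Wᴴ.sum_range_norm_sq_extendByZero_le_one (Unitary.star_mem hW) j n
    have hZ' := Zᴴ.sum_range_norm_sq_extendByZero_le_one (Unitary.star_mem hZ) j n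
    simp only [extendByZero_conjTranspose, norm_star] at hW' hZ'
    linarith
  -- AM-GM: `‖w‖ * ‖z‖ ≤ (‖w‖ ^ 2 + ‖z‖ ^ 2) / 2`
  have hterm : ∀ p q : Fin n, ‖(a p : ℂ) * b q * W.extendByZero p q * star (Z p q)‖ ≤
      a p * b q * P p q := fun p q => by
    rw [← Z.extendByZero_val, norm_mul, norm_mul, norm_mul, norm_star, Complex.norm_real,
      Complex.norm_real, Real.norm_of_nonneg (hσ.singSeq_nonneg _),
      Real.norm_of_nonneg (hτ.singSeq_nonneg _), mul_assoc (a p * b q)]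
    have hamgm := two_mul_le_add_sq ‖W.extendByZero p q‖ ‖Z.extendByZero p q‖
    exact mul_le_mul_of_nonneg_left (by simp only [P]; linarith)
      (mul_nonneg (hσ.singSeq_nonneg _) (hτ.singSeq_nonneg _))
  calc ‖((svdMat m n r σ)ᴴ * W * svdMat m n s τ * Zᴴ).trace‖
      = ‖∑ p : Fin n, ∑ q : Fin n, (a p : ℂ) * b q * W.extendByZero p q * star (Z p q)‖ := by
        simp only [trace_mul_conjTranspose, conjTranspose_svdMat_mul_mul_svdMat_apply, a, b]
    _ ≤ ∑ p : Fin n, ∑ q : Fin n, a p * b q * P p q :=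
        (norm_sum_le _ _).trans (sum_le_sum fun p _ =>
          (norm_sum_le _ _).trans (sum_le_sum fun q _ => hterm p q))
    _ = ∑ i ∈ range n, ∑ j ∈ range n, a i * b j * P i j := by
        rw [← Fin.sum_univ_eq_sum_range]
        simp only [← Fin.sum_univ_eq_sum_range (fun j => a _ * b j * P _ j)]
    _ ≤ ∑ k ∈ range n, a k * b k :=
        sum_range_sum_range_mul_le_of_antitone hσ.antitone_singSeq hσ.singSeq_nonneg
          hτ.antitone_singSeq hτ.singSeq_nonneg (fun _ _ => by positivity) hrow hcol

theorem trace_conjTranspose_mul_factored {m n : ℕ} (U U' : Matrix (Fin m) (Fin m) ℂ)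
    (X Y : Matrix (Fin m) (Fin n) ℂ) (V V' : Matrix (Fin n) (Fin n) ℂ) :
    ((U * X * Vᴴ)ᴴ * (U' * Y * V'ᴴ)).trace = (Xᴴ * (Uᴴ * U') * Y * (Vᴴ * V')ᴴ).trace := by
  simp only [conjTranspose_mul, conjTranspose_conjTranspose, Matrix.mul_assoc]
  rw [trace_mul_comm]
  simp only [Matrix.mul_assoc]

theorem HasSVD.norm_trace_conjTranspose_mul_le {m n r s : ℕ} {A B : Matrix (Fin m) (Fin n) ℂ}
    {σ τ : ℕ → ℝ} (hA : HasSVD A r σ) (hB : HasSVD B s τ) (hσ : SingVals r σ)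
    (hτ : SingVals s τ) (hrs : r ≤ s) (hrn : r ≤ n) :
    ‖(Aᴴ * B).trace‖ ≤ ∑ j ∈ Icc 1 r, σ j * τ j := by
  obtain ⟨U, V, -, hU, -, hV, rfl⟩ := hA
  obtain ⟨U', V', -, hU', -, hV', rfl⟩ := hB
  have unitary {d : ℕ} {X : Matrix (Fin d) (Fin d) ℂ} (hX : X * Xᴴ = 1) :
      X ∈ unitaryGroup (Fin d) ℂ := mem_unitaryGroup_iff.2 hX
  rw [trace_conjTranspose_mul_factored, ← sum_range_singSeq_mul_singSeq σ τ hrs hrn]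
  exact norm_trace_svdMat_unitary_le hσ hτ
    (mul_mem (Unitary.star_mem (unitary hU)) (unitary hU'))
    (mul_mem (Unitary.star_mem (unitary hV)) (unitary hV'))

theorem HasSVD.conjTranspose_mul_self {m n r : ℕ} {A : Matrix (Fin m) (Fin n) ℂ} {σ : ℕ → ℝ}
    (hA : HasSVD A r σ) (hrm : r ≤ m) :
    ∃ V : Matrix (Fin n) (Fin n) ℂ, Vᴴ * V = 1 ∧ V * Vᴴ = 1 ∧
      Aᴴ * A = V * diagonal (fun p : Fin n => (singSeq r σ p : ℂ) ^ 2) * Vᴴ := by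
  obtain ⟨U, V, hU, -, hV, hV', rfl⟩ := hA
  refine ⟨V, hV, hV', ?_⟩
  rw [← conjTranspose_svdMat_mul_svdMat σ hrm]
  simp only [conjTranspose_mul, conjTranspose_conjTranspose, Matrix.mul_assoc]
  rw [← Matrix.mul_assoc Uᴴ U, hU, Matrix.one_mul]

theorem HasSVD.frob_sq {m n r : ℕ} {A : Matrix (Fin m) (Fin n) ℂ} {σ : ℕ → ℝ}
    (hA : HasSVD A r σ) (hrmn : r ≤ min m n) : frob A ^ 2 = ∑ j ∈ Icc 1 r, σ j ^ 2 := by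
  obtain ⟨V, hV, -, hAA⟩ := hA.conjTranspose_mul_self (hrmn.trans (min_le_left _ _))
  rw [frob_sq_eq_re_trace, hAA, trace_mul_cycle, hV, Matrix.one_mul, trace_diagonal,
    Complex.re_sum, Fin.sum_univ_eq_sum_range (fun k => ((singSeq r σ k : ℂ) ^ 2).re)]
  simp_rw [sq, ← sum_range_singSeq_mul_singSeq σ σ le_rfl (hrmn.trans (min_le_right _ _))]
  simp [← Complex.ofReal_mul]

open scoped MatrixOrder in
theorem absMat_eq_sqrt {m n : ℕ} (A : Matrix (Fin m) (Fin n) ℂ) :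
    absMat A = CFC.sqrt (Aᴴ * A) := by
  have hA := Matrix.posSemidef_conjTranspose_mul_self A
  rw [CFC.sqrt_eq_real_sqrt _ hA.nonneg, cfcₙ_eq_cfc, hA.1.cfc_eq]
  simp only [absMat, IsHermitian.cfc, Unitary.conjStarAlgAut_apply]
  rfl

open scoped MatrixOrder in
theorem HasSVD.absMat {m n r : ℕ} {A : Matrix (Fin m) (Fin n) ℂ} {σ : ℕ → ℝ}
    (hA : HasSVD A r σ) (hσ : SingVals r σ) (hrm : r ≤ m) : HasSVD (absMat A) r σ := by
  obtain ⟨V, hV, hV', hAA⟩ := hA.conjTranspose_mul_self hrm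
  refine ⟨V, V, hV, hV', hV, hV', ?_⟩
  have hD : (diagonal fun p : Fin n => (singSeq r σ p : ℂ)).PosSemidef :=
    posSemidef_diagonal_iff.2 fun p => by exact_mod_cast hσ.singSeq_nonneg p
  rw [absMat_eq_sqrt, svdMat_self]
  refine CFC.sqrt_unique ?_ (hD.mul_mul_conjTranspose_same V).nonneg
  rw [hAA]
  simp only [Matrix.mul_assoc]
  rw [← Matrix.mul_assoc Vᴴ V, hV, Matrix.one_mul, ← Matrix.mul_assoc (diagonal _),
    diagonal_mul_diagonal]
  simp only [sq]

theorem Real.sqrt_div_mul_le_of_sq_le {a b x y : ℝ} (hx : 0 ≤ x) (hy : 0 ≤ y)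
    (hxb : x ^ 2 ≤ b) (hay : a ≤ y ^ 2) : √(a / b) * x ≤ y := by
  rw [← Real.sqrt_sq hx, ← Real.sqrt_mul' _ (sq_nonneg x), ← Real.sqrt_sq hy]
  refine Real.sqrt_le_sqrt ?_
  rcases le_or_gt a 0 with ha | ha
  · exact (mul_nonpos_of_nonpos_of_nonneg (div_nonpos_of_nonpos_of_nonneg ha
      ((sq_nonneg x).trans hxb)) (sq_nonneg x)).trans (sq_nonneg y)
  rcases eq_or_lt_of_le ((sq_nonneg x).trans hxb) with hb | hb
  · rw [← hb, div_zero, zero_mul]; exact sq_nonneg y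
  calc a / b * x ^ 2 ≤ a / b * b := mul_le_mul_of_nonneg_left hxb (div_pos ha hb).le
    _ = a := div_mul_cancel₀ a hb.ne'
    _ ≤ y ^ 2 := hay

theorem sharp_lower_bound_positive_factor_general
    (m n r s : ℕ) (hrs : r ≤ s) (hsmn : s ≤ min m n)
    (A E At : Matrix (Fin m) (Fin n) ℂ) (hAt : At = A + E)
    (σ τ : ℕ → ℝ) (hσ : SingVals r σ) (hτ : SingVals s τ)
    (hA : HasSVD A r σ) (hAtilde : HasSVD At s τ)
    (F G : ℝ)
    (hF : F = ∑ j ∈ Finset.Icc 1 r, σ j ^ 2 + ∑ j ∈ Finset.Icc 1 s, τ j ^ 2)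
    (hG : G = ∑ j ∈ Finset.Icc 1 r, σ j * τ j) :
    frob (absMat A - absMat At) ≥
      Real.sqrt ((F - 2 * G) / (F + 2 * G)) * frob E := by
  have hrmn : r ≤ min m n := hrs.trans hsmn
  have hsm : s ≤ m := hsmn.trans (min_le_left _ _)
  have hsn : s ≤ n := hsmn.trans (min_le_right _ _)
  have hrn : r ≤ n := hrs.trans hsn
  have hH := hA.absMat hσ (hrs.trans hsm)
  have hHt := hAtilde.absMat hτ hsm
  have hcross := (hA.norm_trace_conjTranspose_mul_le hAtilde hσ hτ hrs hrn).trans_eq hG.symm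
  have hcrossH := (hH.norm_trace_conjTranspose_mul_le hHt hσ hτ hrs hrn).trans_eq hG.symm
  have hE : frob E ^ 2 ≤ F + 2 * G := by
    rw [eq_sub_of_add_eq' hAt.symm, frob_sub_comm, frob_sub_sq, hA.frob_sq hrmn,
      hAtilde.frob_sq hsmn, ← hF]
    linarith [neg_abs_le (Aᴴ * At).trace.re, Complex.abs_re_le_norm (Aᴴ * At).trace]
  have hHHt : F - 2 * G ≤ frob (absMat A - absMat At) ^ 2 := by
    rw [frob_sub_sq, hH.frob_sq (by simpa using hrn), hHt.frob_sq (by simpa using hsn), ← hF]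
    linarith [le_abs_self ((absMat A)ᴴ * absMat At).trace.re,
      Complex.abs_re_le_norm ((absMat A)ᴴ * absMat At).trace]
  exact Real.sqrt_div_mul_le_of_sq_le (Real.sqrt_nonneg _) (Real.sqrt_nonneg _) hE hHHt

theorem sharp_lower_bound_positive_factor
    (m n r s : ℕ) (hm : 0 < m) (hn : 0 < n) (hrs : r ≤ s) (hsmn : s ≤ min m n)
    (A E At : Matrix (Fin m) (Fin n) ℂ) (hAt : At = A + E)
    (σ τ : ℕ → ℝ) (hσ : SingVals r σ) (hτ : SingVals s τ)
    (hA : HasSVD A r σ) (hAtilde : HasSVD At s τ)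
    (hrankA : A.rank = r) (hrankAt : At.rank = s)
    (F G : ℝ)
    (hF : F = ∑ j ∈ Finset.Icc 1 r, σ j ^ 2 + ∑ j ∈ Finset.Icc 1 s, τ j ^ 2)
    (hG : G = ∑ j ∈ Finset.Icc 1 r, σ j * τ j) :
    frob (absMat A - absMat At) ≥
      Real.sqrt ((F - 2 * G) / (F + 2 * G)) * frob E :=
  sharp_lower_bound_positive_factor_general m n r s hrs hsmn A E At hAt σ τ hσ hτ hA hAtilde F G hF
    hG
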